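/- arXiv:2203.11761 — 2 statements merged into one kernel-verified Lean document; each statement's English description precedes it below -/
import Mathlib

section
/- Fix naturals a, b, let F be the Fibonacci sequence (F 0 = 0, F 1 = 1), and define h : ℤ → ℤ with h n = 0 for n < 0, h 0 = 1, h 1 = a, h 2 = a^2 + b, h 3 = a^3 + 3ab, and h n = a*h(n-1) + b*h(n-2) + a*b*h(n-3) + b^2*h(n-4) for n ≥ 4. Then for all n ≥ 1: h(2n-1) = a * ∑_{k=0}^{n} b^k * h(2n-2k-2) * F(k+2). -/
/-!
Index the even values by `u j = h (2j - 2)` and write `C n = ∑_{k ≤ n} bᵏ u(n-k) F(k+2)` for the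
Fibonacci-weighted convolution appearing on the right. Splitting `F(k+2) = F(k+1) + F(k)` and
shifting the summation index gives `C(n+2) = u(n+2) + b u(n+1) + b C(n+1) + b² C(n)`. Multiplied by
`a`, this is exactly the defining recurrence of `h` evaluated at the odd index `2n+5`, so the claim
follows by two-step induction from the values at `n = 1, 2`.
-/

open Finset

section FibConv

variable {R : Type*} [CommSemiring R]

def fibConv (b : R) (u : ℕ → R) (n : ℕ) : R :=
  ∑ k ∈ range (n + 1), b ^ k * u (n - k) * Nat.fib (k + 2)

lemma sum_range_succ_pow_mul_shift (b : R) (u : ℕ → R) (G : ℕ → R) (N : ℕ) :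
    ∑ k ∈ range (N + 2), b ^ k * u (N + 1 - k) * G k
      = u (N + 1) * G 0 + b * ∑ k ∈ range (N + 1), b ^ k * u (N - k) * G (k + 1) := by
  rw [sum_range_succ', add_comm, mul_sum]
  congr 1
  · simp
  · refine sum_congr rfl fun k _ => ?_
    rw [Nat.add_sub_add_right, pow_succ]
    ring

lemma fibConv_add_two (b : R) (u : ℕ → R) (n : ℕ) :
    fibConv b u (n + 2)
      = u (n + 2) + b * u (n + 1) + b * fibConv b u (n + 1) + b ^ 2 * fibConv b u n := by
  have hsplit : fibConv b u (n + 2)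
      = ∑ k ∈ range (n + 3), b ^ k * u (n + 2 - k) * Nat.fib (k + 1)
        + ∑ k ∈ range (n + 3), b ^ k * u (n + 2 - k) * Nat.fib k := by
    rw [fibConv, ← sum_add_distrib]
    refine sum_congr rfl fun k _ => ?_
    rw [Nat.fib_add_two, Nat.cast_add]
    ring
  rw [hsplit, sum_range_succ_pow_mul_shift b u (fun k => (Nat.fib (k + 1) : R)),
    sum_range_succ_pow_mul_shift b u (fun k => (Nat.fib k : R)),
    sum_range_succ_pow_mul_shift b u (fun k => (Nat.fib (k + 1) : R)), fibConv, fibConv]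
  simp only [Nat.fib_zero, Nat.cast_zero]
  ring

end FibConv

theorem stmt_9 (a b : ℕ) (h : ℤ → ℤ)
    (hneg : ∀ n : ℤ, n < 0 → h n = 0)
    (h0 : h 0 = 1) (h1 : h 1 = a) (h2 : h 2 = (a : ℤ) ^ 2 + b)
    (h3 : h 3 = (a : ℤ) ^ 3 + 3 * a * b)
    (hrec : ∀ n : ℤ, 4 ≤ n →
      h n = a * h (n - 1) + b * h (n - 2) + a * b * h (n - 3) + b ^ 2 * h (n - 4)) :
    ∀ n : ℕ, 1 ≤ n →
      h (2 * (n : ℤ) - 1) =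
        a * ∑ k ∈ Finset.range (n + 1),
          (b : ℤ) ^ k * h (2 * (n : ℤ) - 2 * k - 2) * Nat.fib (k + 2) := by
  obtain ⟨u, hu⟩ : ∃ u : ℕ → ℤ, ∀ j : ℕ, u j = h (2 * j - 2) := ⟨_, fun _ => rfl⟩
  have hsum (n : ℕ) :
      ∑ k ∈ range (n + 1), (b : ℤ) ^ k * h (2 * (n : ℤ) - 2 * k - 2) * Nat.fib (k + 2)
        = fibConv (b : ℤ) u n := by
    refine sum_congr rfl fun k hk => ?_
    rw [hu, Nat.cast_sub (Nat.lt_succ_iff.mp (mem_range.mp hk))]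
    ring_nf
  have hodd : ∀ n : ℕ, h (2 * n + 1) = a * fibConv (b : ℤ) u (n + 1) := by
    have hm2 : h (-2) = 0 := hneg _ (by norm_num)
    refine Nat.twoStepInduction ?_ ?_ fun n ih₀ ih₁ => ?_
    · simp [fibConv, sum_range_succ, hu, hm2, h0, h1]
    · simp [fibConv, sum_range_succ, hu, hm2, h0, h2, h3]
      ring
    · rw [fibConv_add_two, hu, hu, hrec _ (by omega)]
      push_cast at ih₀ ih₁ ⊢
      ring_nf at ih₀ ih₁ ⊢
      linear_combination (b : ℤ) * ih₁ + (b : ℤ) ^ 2 * ih₀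
  rintro (_ | n) hn
  · omega
  · rw [hsum, ← hodd]
    push_cast
    ring_nf
end

section
/- Let T be the tribonacci sequence (T 0 = T 1 = 0, T 2 = 1, T n = T(n-1)+T(n-2)+T(n-3) for n ≥ 3) and F the Fibonacci sequence (F 0 = 0, F 1 = 1). Then for all n ≥ 0: T(n+2) = ∑_{k=0}^{⌊n/3⌋} ∑ over (k+1)-tuples (i₀,...,i_k) of nonnegative integers with i₀+⋯+i_k = n-2k+1 of F(i₀)⋯F(i_k). -/
open Finset

private def gg (k m : ℕ) : ℕ :=
  ∑ f ∈ Finset.Nat.antidiagonalTuple (k + 1) m, ∏ i, Nat.fib (f i)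

private def AA (n : ℕ) : ℕ := ∑ k ∈ Finset.range (n / 3 + 1), gg k (n - 2 * k + 1)

private def DD (n : ℕ) : ℕ := ∑ b ∈ Finset.range (n + 1), Nat.fib b * AA (n - b)

private lemma gg_zero (m : ℕ) : gg 0 m = Nat.fib m := by
  simp [gg, Finset.Nat.antidiagonalTuple_one]

private lemma gg_vanish {k m : ℕ} (h : m ≤ k) : gg k m = 0 := by
  apply Finset.sum_eq_zero
  intro f hf
  rw [Finset.Nat.mem_antidiagonalTuple] at hf
  have : ∃ i, f i = 0 := by
    by_contra hc
    push_neg at hc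
    have h1 : ∀ i ∈ (univ : Finset (Fin (k + 1))), 1 ≤ f i := fun i _ =>
      Nat.one_le_iff_ne_zero.2 (hc i)
    have h2 := Finset.sum_le_sum h1
    simp only [Finset.sum_const, card_univ, Fintype.card_fin, smul_eq_mul, mul_one] at h2
    omega
  obtain ⟨i, hi⟩ := this
  exact Finset.prod_eq_zero (Finset.mem_univ i) (by simp [hi])

private lemma gg_succ (k m : ℕ) :
    gg (k + 1) m = ∑ b ∈ Finset.range (m + 1), Nat.fib b * gg k (m - b) := by
  unfold gg
  simp_rw [Finset.mul_sum]
  rw [Finset.sum_sigma' (Finset.range (m + 1))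
    (fun b => Finset.Nat.antidiagonalTuple (k + 1) (m - b))
    (fun b f => Nat.fib b * ∏ i, Nat.fib (f i))]
  refine Finset.sum_nbij' (fun h => ⟨h 0, Fin.tail h⟩) (fun p => Fin.cons p.1 p.2)
    ?_ ?_ ?_ ?_ ?_
  · intro h hh
    simp only [Finset.Nat.mem_antidiagonalTuple] at hh
    have hsum : h 0 + ∑ i, Fin.tail h i = m := by
      rw [← hh]; exact (Fin.sum_univ_succ h).symm
    simp only [Finset.mem_sigma, Finset.mem_range, Finset.Nat.mem_antidiagonalTuple]
    constructor
    · omega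
    · omega
  · rintro ⟨b, f⟩ hp
    simp only [Finset.mem_sigma, Finset.mem_range, Finset.Nat.mem_antidiagonalTuple] at hp ⊢
    rw [Fin.sum_cons, hp.2]
    omega
  · intro h _
    exact Fin.cons_self_tail h
  · rintro ⟨b, f⟩ _
    simp [Fin.tail_cons]
  · intro h _
    exact Fin.prod_univ_succ (fun i => Nat.fib (h i))

private lemma AA_ext (m N : ℕ) (h : m / 3 < N) :
    ∑ j ∈ Finset.range N, gg j (m - 2 * j + 1) = AA m := by
  unfold AA
  symm
  apply Finset.sum_subset
  · exact Finset.range_subset_range.2 h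
  · intro j _ hj
    simp only [Finset.mem_range] at hj
    push_neg at hj
    exact gg_vanish (by omega)

private lemma AA_renewal (n : ℕ) : AA (n + 2) = Nat.fib (n + 3) + DD n := by
  have h1 : AA (n + 2) = ∑ k ∈ Finset.range (n + 3), gg k (n + 2 - 2 * k + 1) :=
    (AA_ext (n + 2) (n + 3) (by omega)).symm
  rw [h1, Finset.sum_range_succ']
  have h0 : gg 0 (n + 2 - 2 * 0 + 1) = Nat.fib (n + 3) := by
    rw [gg_zero]; norm_num
  rw [h0, add_comm]
  congr 1
  have h2 : ∀ j ∈ Finset.range (n + 2), gg (j + 1) (n + 2 - 2 * (j + 1) + 1)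
      = ∑ b ∈ Finset.range (n + 2), Nat.fib b * gg j (n - 2 * j + 1 - b) := by
    intro j _
    have he : n + 2 - 2 * (j + 1) + 1 = n - 2 * j + 1 := by omega
    rw [he, gg_succ]
    apply Finset.sum_subset
    · exact Finset.range_subset_range.2 (by omega)
    · intro b _ hb
      simp only [Finset.mem_range] at hb
      have : n - 2 * j + 1 - b = 0 := by omega
      rw [this, gg_vanish (Nat.zero_le j)]
      ring
  rw [Finset.sum_congr rfl h2, Finset.sum_comm, Finset.sum_range_succ]
  have hlast : ∑ j ∈ Finset.range (n + 2), Nat.fib (n + 1) * gg j (n - 2 * j + 1 - (n + 1))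
      = 0 := by
    apply Finset.sum_eq_zero
    intro j _
    have hz : n - 2 * j + 1 - (n + 1) = 0 := by omega
    rw [hz, gg_vanish (Nat.zero_le j)]
    ring
  rw [hlast, add_zero]
  unfold DD
  apply Finset.sum_congr rfl
  intro b hb
  simp only [Finset.mem_range] at hb
  have hterm : ∀ j ∈ Finset.range (n + 2),
      Nat.fib b * gg j (n - 2 * j + 1 - b) = Nat.fib b * gg j (n - b - 2 * j + 1) := by
    intro j _
    have hcase : n - 2 * j + 1 - b = n - b - 2 * j + 1 ∨
        (n - 2 * j + 1 - b ≤ j ∧ n - b - 2 * j + 1 ≤ j) := by omega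
    rcases hcase with hc | ⟨hc1, hc2⟩
    · rw [hc]
    · rw [gg_vanish hc1, gg_vanish hc2]
  rw [Finset.sum_congr rfl hterm, ← Finset.mul_sum, AA_ext (n - b) (n + 2) (by omega)]

private lemma DD_rec (n : ℕ) : DD (n + 2) = AA (n + 1) + DD (n + 1) + DD n := by
  have hD1 : DD (n + 1) = ∑ b ∈ Finset.range (n + 1), Nat.fib (b + 1) * AA (n - b) := by
    unfold DD
    rw [Finset.sum_range_succ']
    simp
  unfold DD
  rw [Finset.sum_range_succ', Finset.sum_range_succ']
  have hf2 : ∀ b ∈ Finset.range (n + 1),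
      Nat.fib (b + 1 + 1) * AA (n + 2 - (b + 1 + 1)) =
        Nat.fib (b + 1) * AA (n - b) + Nat.fib b * AA (n - b) := by
    intro b _
    have : n + 2 - (b + 1 + 1) = n - b := by omega
    rw [this, Nat.fib_add_two]; ring
  rw [Finset.sum_congr rfl hf2, Finset.sum_add_distrib]
  rw [← hD1]
  simp [DD]
  omega

private lemma AA_rec (n : ℕ) : AA (n + 3) = AA (n + 2) + AA (n + 1) + AA n := by
  cases n with
  | zero => decide
  | succ m =>
    have h4 : AA (m + 4) = Nat.fib (m + 5) + DD (m + 2) := AA_renewal (m + 2)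
    have h3 : AA (m + 3) = Nat.fib (m + 4) + DD (m + 1) := AA_renewal (m + 1)
    have h2 : AA (m + 2) = Nat.fib (m + 3) + DD m := AA_renewal m
    have hf : Nat.fib (m + 5) = Nat.fib (m + 4) + Nat.fib (m + 3) := by
      rw [Nat.fib_add_two]; ring
    rw [h4, hf, DD_rec m, h3, h2]
    ring

theorem stmt_13 (T : ℕ → ℕ)
    (T0 : T 0 = 0) (T1 : T 1 = 0) (T2 : T 2 = 1)
    (Trec : ∀ n, T (n + 3) = T (n + 2) + T (n + 1) + T n) :
    ∀ n : ℕ, T (n + 2) = ∑ k ∈ Finset.range (n / 3 + 1),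
      ∑ f ∈ Finset.Nat.antidiagonalTuple (k + 1) (n - 2 * k + 1),
        ∏ i, Nat.fib (f i) := by
  have key : ∀ n, T (n + 2) = AA n ∧ T (n + 3) = AA (n + 1) ∧ T (n + 4) = AA (n + 2) := by
    intro n
    induction n with
    | zero =>
      have hA0 : AA 0 = 1 := by decide
      have hA1 : AA 1 = 1 := by decide
      have hA2 : AA 2 = 2 := by decide
      have hT3 : T 3 = 1 := by rw [Trec 0, T0, T1, T2]
      have hT4 : T 4 = 2 := by rw [Trec 1, T1, T2, hT3]
      exact ⟨by rw [T2, hA0], by rw [hT3, hA1], by rw [hT4, hA2]⟩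
    | succ n ih =>
      refine ⟨ih.2.1, ih.2.2, ?_⟩
      have : T (n + 5) = T (n + 4) + T (n + 3) + T (n + 2) := Trec (n + 2)
      rw [show n + 1 + 4 = n + 5 by ring, this, ih.1, ih.2.1, ih.2.2,
        show n + 1 + 2 = n + 3 by ring, AA_rec]
  intro n
  have := (key n).1
  rw [this]
  rfl
end
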